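/- Chapman–Kolmogorov for emulation: if Φ is branching and C, D ∈ Φ, then for all m, n ≥ 0, μ_C^{(m+n)}(D|Φ) = Σ_{X ∈ Φ} μ_C^{(m)}(X|Φ) · μ_X^{(n)}(D|Φ). -/

import Mathlib

open scoped Classical

/-- Binary strings. -/
abbrev Str := List Bool

/-- A computer: a partial function on binary strings (`none` = undefined). -/
abbrev Computer := Str → Option Str

/-- `C` emulates `D` via the string `x`: `C (x ⊗ s) = D s` for all `s`. -/
def emulates (C D : Computer) (x : Str) : Prop := ∀ s : Str, C (x ++ s) = D s

/-- The computer `C →x`, i.e. `s ↦ C (x ⊗ s)`. -/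
def shiftC (C : Computer) (x : Str) : Computer := fun s => C (x ++ s)

/-- `C` emulates `D` via some string. -/
def emu (C D : Computer) : Prop := ∃ x : Str, emulates C D x

/-- `Φ` is connected: some `U ∈ Φ` emulates every member of `Φ`. -/
def Connected (Φ : Set Computer) : Prop := ∃ U ∈ Φ, ∀ X ∈ Φ, emu U X

/-- The set `Φ^U` of `Φ`-universal computers. -/
def univSet (Φ : Set Computer) : Set Computer := {U | U ∈ Φ ∧ ∀ X ∈ Φ, emu U X}

/-- The closure `Φ̄^U`: computers emulating every member of `Φ` and emulated by some member of `Φ`. -/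
def closureU (Φ : Set Computer) : Set Computer :=
  {C | (∀ D ∈ Φ, emu C D) ∧ ∃ X ∈ Φ, emu X C}

/-- A branching set of computers. -/
def Branching (Φ : Set Computer) : Prop :=
  ∀ C ∈ Φ, (∀ x y : Str, shiftC C (x ++ y) ∈ Φ → shiftC C x ∈ Φ) ∧
    ∃ x : Str, x ≠ [] ∧ shiftC C x ∈ Φ

/-- The `Φ`-tree of `C`: inputs making `C` emulate a member of `Φ`. -/
def tree (Φ : Set Computer) (C : Computer) : Set Str := {x | shiftC C x ∈ Φ}

/-- Helper for path probability, recursing over the reversed path. -/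
noncomputable def pathProbAux (T : Set Str) : Str → ℝ
  | [] => 1
  | b :: r => if r.reverse ++ [!b] ∈ T then pathProbAux T r / 2 else pathProbAux T r

/-- Path probability on the tree `T`: `μ(λ) = 1`, and the probability halves
exactly at binary branch points (where the sibling node is also in `T`). -/
noncomputable def pathProb (T : Set Str) (x : Str) : ℝ := pathProbAux T x.reverse

/-- The `n`-step computer probability `μ_C^{(n)}(D|Φ)`: probability of arriving
at the computer `D` after `n` steps of the random walk on the `Φ`-tree of `C`. -/
noncomputable def nstep (Φ : Set Computer) (C D : Computer) (n : ℕ) : ℝ :=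
  ∑' x : {x : Str // x.length = n ∧ shiftC C x = D}, pathProb (tree Φ C) (x : Str)

/-! Path probability is multiplicative along concatenation: the weight of `y ++ z` in the
`Φ`-tree of `C` is the weight of `y` times the weight of `z` in the `Φ`-tree of `C →y`.
Splitting a path of length `m + n` after `m` steps therefore gives
`μ_C^{(m+n)}(D) = Σ_{|y| = m} μ(y) μ_{C →y}^{(n)}(D)`, and grouping the `y` by the computer
`C →y` turns this into a sum over all computers. The terms with `C →y ∉ Φ` vanish because
a branching `Φ` is closed under prefixes: `(C →y) →z = D ∈ Φ` forces `C →y ∈ Φ`. -/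

lemma shiftC_append (C : Computer) (y z : Str) : shiftC C (y ++ z) = shiftC (shiftC C y) z := by
  funext s
  simp [shiftC, List.append_assoc]

lemma tree_shiftC (Φ : Set Computer) (C : Computer) (y : Str) :
    tree Φ (shiftC C y) = (y ++ ·) ⁻¹' tree Φ C := by
  ext s
  simp [tree, shiftC_append]

lemma pathProb_nil (T : Set Str) : pathProb T [] = 1 := rfl

lemma pathProb_append_singleton (T : Set Str) (x : Str) (b : Bool) :
    pathProb T (x ++ [b]) = if x ++ [!b] ∈ T then pathProb T x / 2 else pathProb T x := by
  simp [pathProb, pathProbAux]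

lemma pathProb_append (T : Set Str) (y z : Str) :
    pathProb T (y ++ z) = pathProb ((y ++ ·) ⁻¹' T) z * pathProb T y := by
  induction z using List.reverseRecOn with
  | nil => simp [pathProb_nil]
  | append_singleton z b ih =>
    rw [← List.append_assoc, pathProb_append_singleton, pathProb_append_singleton, ih]
    by_cases hb : y ++ (z ++ [!b]) ∈ T
    · simp [hb, div_mul_eq_mul_div]
    · simp [hb]

lemma nstep_eq_sum (Φ : Set Computer) (C D : Computer) (n : ℕ) :
    nstep Φ C D n = ∑ v : List.Vector Bool n,
      if shiftC C v.toList = D then pathProb (tree Φ C) v.toList else 0 := by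
  rw [nstep, ← (Equiv.subtypeSubtypeEquivSubtypeInter _ _).tsum_eq]
  exact (tsum_subtype {v : List.Vector Bool n | shiftC C v.toList = D}
    fun v => pathProb (tree Φ C) v.toList).trans (tsum_fintype _)

lemma nstep_eq_zero_of_forall_ne {Φ : Set Computer} {C D : Computer} {n : ℕ}
    (h : ∀ x : Str, x.length = n → shiftC C x ≠ D) : nstep Φ C D n = 0 := by
  have : IsEmpty {x : Str // x.length = n ∧ shiftC C x = D} := ⟨fun x => h x.1 x.2.1 x.2.2⟩
  rw [nstep, tsum_empty]

def vectorSplitEquiv (α : Type*) (m n : ℕ) :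
    List.Vector α (m + n) ≃ List.Vector α m × List.Vector α n where
  toFun w := (⟨w.toList.take m, by simp⟩, ⟨w.toList.drop m, by simp⟩)
  invFun p := p.1 ++ p.2
  left_inv w := Subtype.ext (List.take_append_drop m w.toList)
  right_inv p := Prod.ext (List.Vector.eq _ _ (by simp)) (List.Vector.eq _ _ (by simp))

@[simp]
lemma vectorSplitEquiv_symm_toList {α : Type*} {m n : ℕ}
    (p : List.Vector α m × List.Vector α n) :
    ((vectorSplitEquiv α m n).symm p).toList = p.1.toList ++ p.2.toList := rfl

lemma nstep_add (Φ : Set Computer) (C D : Computer) (m n : ℕ) :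
    nstep Φ C D (m + n) = ∑ y : List.Vector Bool m,
      pathProb (tree Φ C) y.toList * nstep Φ (shiftC C y.toList) D n := by
  rw [nstep_eq_sum, ← (vectorSplitEquiv Bool m n).symm.sum_comp, Fintype.sum_prod_type]
  refine Finset.sum_congr rfl fun y _ => ?_
  simp only [vectorSplitEquiv_symm_toList, shiftC_append, pathProb_append, ← tree_shiftC,
    nstep_eq_sum, Finset.mul_sum, mul_ite, zero_mul, mul_comm]

lemma tsum_nstep_mul (Φ : Set Computer) (C : Computer) (m : ℕ) (g : Computer → ℝ) :
    ∑' X, nstep Φ C X m * g X =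
      ∑ y : List.Vector Bool m, pathProb (tree Φ C) y.toList * g (shiftC C y.toList) := by
  simp only [nstep_eq_sum, Finset.sum_mul, ite_mul, zero_mul]
  rw [Summable.tsum_finsetSum fun y _ => ?_]
  · exact Finset.sum_congr rfl fun y _ => tsum_ite_eq' _ _
  · exact summable_of_ne_finset_zero (s := {shiftC C y.toList}) fun X hX =>
    if_neg fun h => hX (by simp [h])

lemma Branching.nstep_eq_indicator {Φ : Set Computer} (hb : Branching Φ) {C D : Computer}
    (hC : C ∈ Φ) (hD : D ∈ Φ) (y : Str) (n : ℕ) :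
    nstep Φ (shiftC C y) D n = Φ.indicator (fun X => nstep Φ X D n) (shiftC C y) := by
  by_cases hy : shiftC C y ∈ Φ
  · rw [Set.indicator_of_mem hy]
  · rw [Set.indicator_of_notMem hy]
    refine nstep_eq_zero_of_forall_ne fun z _ hz => hy ((hb C hC).1 y z ?_)
    rwa [shiftC_append, hz]

/-- Chapman–Kolmogorov equation for the emulation Markov process:
`μ_C^{(m+n)}(D|Φ) = Σ_{X ∈ Φ} μ_C^{(m)}(X|Φ) · μ_X^{(n)}(D|Φ)`. -/
theorem chapman_kolmogorov (Φ : Set Computer) (hb : Branching Φ)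
    (C D : Computer) (hC : C ∈ Φ) (hD : D ∈ Φ) (m n : ℕ) :
    nstep Φ C D (m + n) = ∑' X : Φ, nstep Φ C (X : Computer) m * nstep Φ (X : Computer) D n := by
  set h : Computer → ℝ := fun X => nstep Φ X D n
  calc nstep Φ C D (m + n)
      = ∑ y : List.Vector Bool m,
          pathProb (tree Φ C) y.toList * Φ.indicator h (shiftC C y.toList) := by
        simp only [nstep_add, hb.nstep_eq_indicator hC hD, h]
    _ = ∑' X, nstep Φ C X m * Φ.indicator h X := (tsum_nstep_mul Φ C m _).symm
    _ = ∑' X : Φ, nstep Φ C X m * h X := by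
        rw [tsum_subtype Φ fun X => nstep Φ C X m * h X]
        simp only [Set.indicator_mul_right]
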